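/- Fix d ≥ 1 and 0 < ε < 1/2. Let λ be a probability measure on a measurable space Ω and let α ↦ μ_α be a measurable family of Borel probability measures on ℝ^d such that each μ_α is ε-radial. Then the mixture μ = ∫_Ω μ_α dλ(α) is 4√ε-radial. -/

import Mathlib

/-
Cut the unit sphere into finitely many measurable pieces `P i` of geodesic radius `δ` around
centres `c i`.  Up to an error `δ`, the distance `W₁(ν, σ)` of a measure `ν` on the sphere to `σ`
is the cost of transporting the discrete measure `∑ ν(P i) δ_{c i}` to `σ`, a quantity that only
depends on the weight vector `(ν(P i))ᵢ` in the standard simplex.  This semidiscrete cost is convex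
and Lipschitz on the simplex, so Jensen's inequality applies to the weight vectors of a measurable
family `α ↦ ν α` and gives `W₁(∫ ν α dκ, σ) ≤ ∫ W₁(ν α, σ) dκ` without choosing couplings
measurably in `α`.

The radial projection of `μ|S(J)` is the mixture of the radial projections of the `μ_α|S(J)`
under the probability `κ ∝ μ_α(S(J)) dλ`.  Components with `μ_α(S(J)) ≥ ε` are within `ε` of `σ`;
the others have total `κ`-mass at most `ε / μ(S(J)) ≤ √ε / 4` and cost at most `π`.
-/

open MeasureTheory ENNReal
open scoped RealInnerProductSpace

/-- The Monge–Kantorovich transportation cost between two measures, for cost function `c`: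
the infimum of `∫ c(x,y) dγ` over all couplings `γ` of `μ` and `ν`. -/
noncomputable def Wcost {X : Type*} [MeasurableSpace X] (c : X → X → ℝ≥0∞)
    (μ ν : Measure X) : ℝ≥0∞ :=
  ⨅ γ ∈ {γ : Measure (X × X) |
      Measure.map Prod.fst γ = μ ∧ Measure.map Prod.snd γ = ν},
    ∫⁻ p, c p.1 p.2 ∂γ

/-- The geodesic distance on the unit sphere `S^{d-1}`, `ρ(x,y) = arccos (x·y)`,
as an `ℝ≥0∞`-valued cost on `ℝ^d`. -/
noncomputable def geoCost {d : ℕ} (x y : EuclideanSpace ℝ (Fin d)) : ℝ≥0∞ :=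
  ENNReal.ofReal (Real.arccos ⟪x, y⟫)

/-- The `L¹` Monge–Kantorovich distance with respect to the geodesic metric on `S^{d-1}`,
for measures supported on the unit sphere of `ℝ^d`. -/
noncomputable def W1geo {d : ℕ} (μ ν : Measure (EuclideanSpace ℝ (Fin d))) : ℝ≥0∞ :=
  Wcost geoCost μ ν

/-- `σ` is the uniform (rotation-invariant) probability measure on the unit sphere
`S^{d-1} ⊂ ℝ^d`. -/
def IsUniformSphere {d : ℕ} (σ : Measure (EuclideanSpace ℝ (Fin d))) : Prop :=
  IsProbabilityMeasure σ ∧ σ (Metric.sphere (0 : EuclideanSpace ℝ (Fin d)) 1) = 1 ∧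
    ∀ O : EuclideanSpace ℝ (Fin d) ≃ₗᵢ[ℝ] EuclideanSpace ℝ (Fin d),
      Measure.map (fun x => O x) σ = σ

/-- The radial projection `R(x) = x/|x|`. -/
noncomputable def rproj {d : ℕ} (x : EuclideanSpace ℝ (Fin d)) : EuclideanSpace ℝ (Fin d) :=
  ‖x‖⁻¹ • x

/-- The spherical shell `S(J) = {x : |x| ∈ J}`. -/
def shell (d : ℕ) (J : Set ℝ) : Set (EuclideanSpace ℝ (Fin d)) := {x | ‖x‖ ∈ J}

/-- The conditioning `μ|_A` of a measure on a set. -/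
noncomputable def condOn {α : Type*} [MeasurableSpace α] (μ : Measure α) (A : Set α) :
    Measure α := (μ A)⁻¹ • μ.restrict A

/-- `μ` is ε-radial (with respect to the uniform measure `σ` on the sphere): for every
interval `J ⊂ (0,∞)` with `μ(S(J)) ≥ ε`, the radial projection of `μ|_{S(J)}` is within
transportation distance `ε` of `σ`. -/
def IsRadial {d : ℕ} (σ : Measure (EuclideanSpace ℝ (Fin d))) (ε : ℝ)
    (μ : Measure (EuclideanSpace ℝ (Fin d))) : Prop :=
  ∀ J : Set ℝ, J.OrdConnected → J ⊆ Set.Ioi 0 → ENNReal.ofReal ε ≤ μ (shell d J) →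
    W1geo (Measure.map rproj (condOn μ (shell d J))) σ ≤ ENNReal.ofReal ε

open InnerProductGeometry Set Function Real

theorem IsCompact.exists_measurable_partition_subordinate {X : Type*} [TopologicalSpace X]
    [MeasurableSpace X] [OpensMeasurableSpace X] {K : Set X} (hK : IsCompact K)
    (hKm : MeasurableSet K) (U : X → Set X) (hU : ∀ x ∈ K, IsOpen (U x))
    (hxU : ∀ x ∈ K, x ∈ U x) :
    ∃ (N : ℕ) (c : Fin N → X) (P : Fin N → Set X), (∀ i, c i ∈ K) ∧
      (∀ i, MeasurableSet (P i)) ∧ Pairwise (Disjoint on P) ∧ ⋃ i, P i = K ∧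
      ∀ i, P i ⊆ U (c i) := by
  obtain ⟨t, htK, hKt⟩ := hK.elim_nhds_subcover U fun x hx => (hU x hx).mem_nhds (hxU x hx)
  let c : Fin t.card → X := fun i => t.equivFin.symm i
  have hc : ∀ i, c i ∈ K := fun i => htK _ (t.equivFin.symm i).2
  have hcover : K ⊆ ⋃ i, U (c i) := fun x hx => by
    obtain ⟨y, hyt, hxy⟩ := mem_iUnion₂.1 (hKt hx)
    exact mem_iUnion.2 ⟨t.equivFin ⟨y, hyt⟩, by simpa [c] using hxy⟩
  refine ⟨t.card, c, disjointed fun i => K ∩ U (c i), hc, fun i => ?_, disjoint_disjointed _,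
    ?_, fun i => (disjointed_subset _ i).trans inter_subset_right⟩
  · exact disjointedRec (fun s j hs => hs.diff (hKm.inter (hU _ (hc j)).measurableSet))
      (hKm.inter (hU _ (hc i)).measurableSet)
  · rw [iUnion_disjointed, ← inter_iUnion, inter_eq_left.2 hcover]

namespace MeasureTheory.Measure

lemma inv_smul_smul_of_ne_top {α : Type*} [MeasurableSpace α] {a : ℝ≥0∞} (ha : a ≠ ⊤)
    {ρ : Measure α} (h : a = 0 → ρ = 0) : a⁻¹ • a • ρ = ρ := by
  rcases eq_or_ne a 0 with rfl | h₀
  · simp [h rfl]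
  · rw [smul_smul, ENNReal.inv_mul_cancel h₀ ha, one_smul]

lemma map_bind {Ω X Y : Type*} [MeasurableSpace Ω] [MeasurableSpace X] [MeasurableSpace Y]
    (μ : Measure Ω) {κ : Ω → Measure X} (hκ : Measurable κ) {f : X → Y}
    (hf : Measurable f) : (μ.bind κ).map f = μ.bind fun α => (κ α).map f := by
  have hκf : Measurable fun α => (κ α).map f := (Measure.measurable_map f hf).comp hκ
  ext s hs
  rw [Measure.map_apply hf hs, Measure.bind_apply (hf hs) hκ.aemeasurable,
    Measure.bind_apply hs hκf.aemeasurable]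
  simp only [Measure.map_apply hf hs]

end MeasureTheory.Measure

namespace ENNReal

lemma inv_mul_min_mul_self (a : ℝ≥0∞) {b : ℝ≥0∞} (hb : b ≠ ⊤) : b⁻¹ * min a b * b = min a b := by
  rcases eq_or_ne b 0 with rfl | h
  · simp
  · rw [mul_comm, ← mul_assoc, ENNReal.mul_inv_cancel h hb, one_mul]

lemma inv_mul_min_le_one (a b : ℝ≥0∞) : b⁻¹ * min a b ≤ 1 :=
  (mul_le_mul_right (min_le_right a b) _).trans (ENNReal.inv_mul_le_one b)

lemma mul_inv_mul_of_le {a b : ℝ≥0∞} (hab : a ≤ b) (hb : b ≠ ⊤) : a * b⁻¹ * b = a := by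
  rcases eq_or_ne b 0 with rfl | h
  · simp [nonpos_iff_eq_zero.1 hab]
  · rw [mul_assoc, ENNReal.inv_mul_cancel h hb, mul_one]

lemma sum_one_sub_inv_mul_min_mul {ι : Type*} [Fintype ι] {p q : ι → ℝ≥0∞}
    (hq : ∑ i, q i ≠ ⊤) (hpq : ∑ i, p i = ∑ i, q i) :
    ∑ i, (1 - (q i)⁻¹ * min (p i) (q i)) * q i = ∑ i, (p i - q i) := by
  have hq_ne_top : ∀ i, q i ≠ ⊤ := fun i => ENNReal.sum_ne_top.1 hq i (Finset.mem_univ i)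
  refine (ENNReal.add_left_inj (a := ∑ i, min (p i) (q i)) (ne_top_of_le_ne_top hq
    (Finset.sum_le_sum fun i _ => min_le_right _ _))).1 ?_
  rw [← Finset.sum_add_distrib, ← Finset.sum_add_distrib,
    Finset.sum_congr rfl fun _ _ => tsub_add_min, hpq]
  refine Finset.sum_congr rfl fun i _ => ?_
  rw [ENNReal.sub_mul fun _ _ => hq_ne_top i, one_mul, inv_mul_min_mul_self _ (hq_ne_top i),
    tsub_add_cancel_of_le (min_le_right _ _)]

end ENNReal

section GeodesicCost

variable {d : ℕ}

lemma geoCost_le_pi (x y : EuclideanSpace ℝ (Fin d)) : geoCost x y ≤ ENNReal.ofReal π :=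
  ENNReal.ofReal_le_ofReal (Real.arccos_le_pi _)

lemma geoCost_eq_angle {x y : EuclideanSpace ℝ (Fin d)} (hx : ‖x‖ = 1) (hy : ‖y‖ = 1) :
    geoCost x y = ENNReal.ofReal (angle x y) := by
  simp [geoCost, angle, hx, hy]

lemma geoCost_triangle {x y z : EuclideanSpace ℝ (Fin d)} (hx : ‖x‖ = 1) (hy : ‖y‖ = 1)
    (hz : ‖z‖ = 1) : geoCost x z ≤ geoCost x y + geoCost y z := by
  rw [geoCost_eq_angle hx hz, geoCost_eq_angle hx hy, geoCost_eq_angle hy hz,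
    ← ENNReal.ofReal_add (angle_nonneg _ _) (angle_nonneg _ _)]
  exact ENNReal.ofReal_le_ofReal (angle_le_angle_add_angle x y z)

lemma geoCost_self {x : EuclideanSpace ℝ (Fin d)} (hx : ‖x‖ = 1) : geoCost x x = 0 := by
  simp [geoCost, hx]

lemma ae_norm_eq_one {ν : Measure (EuclideanSpace ℝ (Fin d))} (hν : ν (Metric.sphere 0 1)ᶜ = 0) :
    ∀ᵐ y ∂ν, ‖y‖ = 1 :=
  measure_mono_null (fun y hy => by simpa using hy) hν

lemma continuous_geoCost (c : EuclideanSpace ℝ (Fin d)) : Continuous (geoCost c) :=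
  ENNReal.continuous_ofReal.comp
    (Real.continuous_arccos.comp (continuous_const.inner continuous_id))

lemma W1geo_le_lintegral {μ ν : Measure (EuclideanSpace ℝ (Fin d))}
    {γ : Measure (EuclideanSpace ℝ (Fin d) × EuclideanSpace ℝ (Fin d))}
    (h₁ : γ.map Prod.fst = μ) (h₂ : γ.map Prod.snd = ν) :
    W1geo μ ν ≤ ∫⁻ p, geoCost p.1 p.2 ∂γ :=
  iInf₂_le γ ⟨h₁, h₂⟩

lemma W1geo_le_pi (μ ν : Measure (EuclideanSpace ℝ (Fin d))) [IsProbabilityMeasure μ]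
    [IsProbabilityMeasure ν] : W1geo μ ν ≤ ENNReal.ofReal π :=
  calc W1geo μ ν ≤ ∫⁻ p, geoCost p.1 p.2 ∂(μ.prod ν) :=
        W1geo_le_lintegral (by simp) (by simp)
    _ ≤ ∫⁻ _, ENNReal.ofReal π ∂(μ.prod ν) := lintegral_mono fun p => geoCost_le_pi _ _
    _ = ENNReal.ofReal π := by simp

end GeodesicCost

section SemidiscreteCost

variable {ι X Ω : Type*} [Fintype ι] [MeasurableSpace X] [MeasurableSpace Ω]

/- A coupling of `∑ i, p i • δ_{x i}` with `τ` is the same as a splitting `τ = ∑ i, η i` with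
`η i univ = p i`, so this is the optimal transport cost from that discrete measure to `τ` for the
cost `k i y = c (x i) y`. -/
noncomputable def semidiscreteCost (k : ι → X → ℝ≥0∞) (τ : Measure X) (p : ι → ℝ≥0∞) : ℝ≥0∞ :=
  ⨅ η ∈ {η : ι → Measure X | (∀ i, η i univ = p i) ∧ ∑ i, η i = τ}, ∑ i, ∫⁻ y, k i y ∂η i

variable {k : ι → X → ℝ≥0∞} {τ : Measure X} {p q : ι → ℝ≥0∞} {B : ℝ≥0∞}

lemma semidiscreteCost_le {η : ι → Measure X} (hη : ∀ i, η i univ = p i)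
    (hτ : ∑ i, η i = τ) : semidiscreteCost k τ p ≤ ∑ i, ∫⁻ y, k i y ∂η i :=
  iInf₂_le η ⟨hη, hτ⟩

lemma exists_lt_of_semidiscreteCost_lt {t : ℝ≥0∞} (h : semidiscreteCost k τ p < t) :
    ∃ η : ι → Measure X, (∀ i, η i univ = p i) ∧ ∑ i, η i = τ ∧
      ∑ i, ∫⁻ y, k i y ∂η i < t := by
  simp only [semidiscreteCost, iInf_lt_iff] at h
  obtain ⟨η, ⟨hη, hτ⟩, h⟩ := h
  exact ⟨η, hη, hτ, h⟩

lemma semidiscreteCost_le_of_forall_le [IsProbabilityMeasure τ] (hk : ∀ i y, k i y ≤ B)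
    (hp : ∑ i, p i = 1) : semidiscreteCost k τ p ≤ B :=
  calc semidiscreteCost k τ p ≤ ∑ i, ∫⁻ y, k i y ∂(p i • τ) :=
        semidiscreteCost_le (fun i => by simp) (by rw [← Finset.sum_smul, hp, one_smul])
    _ ≤ ∑ i, p i * B := Finset.sum_le_sum fun i _ => by
        rw [lintegral_smul_measure, smul_eq_mul]
        gcongr
        calc ∫⁻ y, k i y ∂τ ≤ ∫⁻ _, B ∂τ := lintegral_mono (hk i)
          _ = B := by simp
    _ = B := by rw [← Finset.sum_mul, hp, one_mul]

lemma semidiscreteCost_smul_add_smul_le (hp : semidiscreteCost k τ p ≠ ⊤)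
    (hq : semidiscreteCost k τ q ≠ ⊤) {a b : ℝ≥0∞} (hab : a + b = 1) :
    semidiscreteCost k τ (a • p + b • q) ≤
      a * semidiscreteCost k τ p + b * semidiscreteCost k τ q := by
  refine ENNReal.le_of_forall_pos_le_add fun δ hδ _ => ?_
  have hδ' : (δ : ℝ≥0∞) ≠ 0 := ENNReal.coe_ne_zero.2 hδ.ne'
  obtain ⟨η, hηp, hητ, hη⟩ := exists_lt_of_semidiscreteCost_lt (ENNReal.lt_add_right hp hδ')
  obtain ⟨η', hη'q, hη'τ, hη'⟩ := exists_lt_of_semidiscreteCost_lt (ENNReal.lt_add_right hq hδ')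
  calc semidiscreteCost k τ (a • p + b • q) ≤ ∑ i, ∫⁻ y, k i y ∂(a • η i + b • η' i) :=
        semidiscreteCost_le (fun i => by simp [hηp, hη'q]) (by
          rw [Finset.sum_add_distrib, ← Finset.smul_sum, ← Finset.smul_sum, hητ, hη'τ,
            ← add_smul, hab, one_smul])
    _ = a * ∑ i, ∫⁻ y, k i y ∂η i + b * ∑ i, ∫⁻ y, k i y ∂η' i := by
        simp only [lintegral_add_measure, lintegral_smul_measure, smul_eq_mul,
          Finset.sum_add_distrib, Finset.mul_sum]
    _ ≤ a * (semidiscreteCost k τ p + δ) + b * (semidiscreteCost k τ q + δ) := by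
        gcongr
    _ = a * semidiscreteCost k τ p + b * semidiscreteCost k τ q + δ := by
        rw [mul_add, mul_add, add_add_add_comm, ← add_mul, hab, one_mul]

lemma semidiscreteCost_le_add_mul_sum_tsub (hk : ∀ i y, k i y ≤ B) (hτ : τ univ ≠ ⊤)
    (hp : ∑ i, p i = τ univ) (hq : ∑ i, q i = τ univ) :
    semidiscreteCost k τ p ≤ semidiscreteCost k τ q + B * ∑ i, (p i - q i) := by
  rw [← tsub_le_iff_right]
  refine le_iInf₂ fun η ⟨hηq, hητ⟩ => tsub_le_iff_right.2 ?_
  set L := ∑ i, (p i - q i) with hL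
  have hL_ne_top : L ≠ ⊤ :=
    ne_top_of_le_ne_top (hp ▸ hτ) (Finset.sum_le_sum fun i _ => tsub_le_self)
  have hpq_le : ∀ i, p i - q i ≤ L := fun i =>
    Finset.single_le_sum (f := fun i => p i - q i) (fun _ _ => bot_le) (Finset.mem_univ i)
  -- keep the fraction `r i` of `η i` and spread the released mass `ℓ` according to `p - q`
  set r : ι → ℝ≥0∞ := fun i => (q i)⁻¹ * min (p i) (q i)
  set ℓ : Measure X := ∑ i, (1 - r i) • η i
  have hℓ : ℓ univ = L := by
    simpa [ℓ, hηq] using ENNReal.sum_one_sub_inv_mul_min_mul (hq ▸ hτ) (hp.trans hq.symm)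
  have hLℓ : (L * L⁻¹) • ℓ = ℓ := by
    rcases eq_or_ne L 0 with h | h
    · rw [Measure.measure_univ_eq_zero.1 (hℓ.trans h), smul_zero]
    · rw [ENNReal.mul_inv_cancel h hL_ne_top, one_smul]
  set η' : ι → Measure X := fun i => r i • η i + ((p i - q i) * L⁻¹) • ℓ
  have hη'_univ : ∀ i, η' i univ = p i := fun i => by
    simp only [η', Measure.add_apply, Measure.smul_apply, smul_eq_mul, hηq, hℓ,
      ENNReal.mul_inv_mul_of_le (hpq_le i) hL_ne_top]
    rw [ENNReal.inv_mul_min_mul_self _ (ENNReal.sum_ne_top.1 (hq ▸ hτ) i (Finset.mem_univ i)),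
      add_comm, tsub_add_min]
  have hη'_sum : ∑ i, η' i = τ := by
    simp only [η', Finset.sum_add_distrib, ← Finset.sum_smul, ← Finset.sum_mul, ← hL, hLℓ]
    simp only [ℓ, ← Finset.sum_add_distrib, ← add_smul]
    rw [← hητ]
    exact Finset.sum_congr rfl fun i _ => by
      rw [add_tsub_cancel_of_le (ENNReal.inv_mul_min_le_one _ _), one_smul]
  calc semidiscreteCost k τ p ≤ ∑ i, ∫⁻ y, k i y ∂η' i := semidiscreteCost_le hη'_univ hη'_sum
    _ = ∑ i, r i * ∫⁻ y, k i y ∂η i + ∑ i, (p i - q i) * L⁻¹ * ∫⁻ y, k i y ∂ℓ := by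
        simp only [η', lintegral_add_measure, lintegral_smul_measure, smul_eq_mul,
          Finset.sum_add_distrib]
    _ ≤ ∑ i, 1 * ∫⁻ y, k i y ∂η i + ∑ i, (p i - q i) * L⁻¹ * ∫⁻ _, B ∂ℓ := by
        gcongr with i _ i _
        · exact ENNReal.inv_mul_min_le_one _ _
        · exact hk i _
    _ = ∑ i, ∫⁻ y, k i y ∂η i + B * L := by
        rw [lintegral_const, hℓ, ← Finset.sum_mul, ← Finset.sum_mul, ← hL, mul_left_comm,
          ENNReal.mul_inv_mul_of_le le_rfl hL_ne_top]
        simp only [one_mul]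

lemma sum_ofReal_eq_one_of_mem_stdSimplex {p : ι → ℝ} (hp : p ∈ stdSimplex ℝ ι) :
    ∑ i, ENNReal.ofReal (p i) = 1 := by
  rw [← ENNReal.ofReal_sum_of_nonneg fun i _ => hp.1 i, hp.2, ENNReal.ofReal_one]

variable [IsProbabilityMeasure τ]

lemma semidiscreteCost_ofReal_ne_top (hB : B ≠ ⊤) (hk : ∀ i y, k i y ≤ B) {p : ι → ℝ}
    (hp : p ∈ stdSimplex ℝ ι) : semidiscreteCost k τ (ENNReal.ofReal ∘ p) ≠ ⊤ :=
  ne_top_of_le_ne_top hB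
    (semidiscreteCost_le_of_forall_le (τ := τ) hk (sum_ofReal_eq_one_of_mem_stdSimplex hp))

lemma convexOn_semidiscreteCost (hB : B ≠ ⊤) (hk : ∀ i y, k i y ≤ B) :
    ConvexOn ℝ (stdSimplex ℝ ι) fun p => (semidiscreteCost k τ (ENNReal.ofReal ∘ p)).toReal := by
  refine ⟨convex_stdSimplex ℝ ι, fun p hp q hq a b ha hb hab => ?_⟩
  have hp' := semidiscreteCost_ofReal_ne_top (τ := τ) hB hk hp
  have hq' := semidiscreteCost_ofReal_ne_top (τ := τ) hB hk hq
  have hcomb : ENNReal.ofReal ∘ (a • p + b • q) =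
      ENNReal.ofReal a • (ENNReal.ofReal ∘ p) + ENNReal.ofReal b • (ENNReal.ofReal ∘ q) := by
    ext i
    simp [ENNReal.ofReal_add (mul_nonneg ha (hp.1 i)) (mul_nonneg hb (hq.1 i)),
      ENNReal.ofReal_mul ha, ENNReal.ofReal_mul hb]
  have hab' : ENNReal.ofReal a + ENNReal.ofReal b = 1 := by
    rw [← ENNReal.ofReal_add ha hb, hab, ENNReal.ofReal_one]
  have h := ENNReal.toReal_mono (by finiteness) (semidiscreteCost_smul_add_smul_le hp' hq' hab')
  rw [ENNReal.toReal_add (by finiteness) (by finiteness), ENNReal.toReal_mul, ENNReal.toReal_mul,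
    ENNReal.toReal_ofReal ha, ENNReal.toReal_ofReal hb, ← hcomb] at h
  exact h

lemma semidiscreteCost_toReal_le_add (hB : B ≠ ⊤) (hk : ∀ i y, k i y ≤ B) {p q : ι → ℝ}
    (hp : p ∈ stdSimplex ℝ ι) (hq : q ∈ stdSimplex ℝ ι) :
    (semidiscreteCost k τ (ENNReal.ofReal ∘ p)).toReal ≤
      (semidiscreteCost k τ (ENNReal.ofReal ∘ q)).toReal + B.toReal * ∑ i, |p i - q i| := by
  have hsum : ∑ i, (ENNReal.ofReal (p i) - ENNReal.ofReal (q i)) ≤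
      ENNReal.ofReal (∑ i, |p i - q i|) := by
    rw [ENNReal.ofReal_sum_of_nonneg fun i _ => abs_nonneg _]
    refine Finset.sum_le_sum fun i _ => ?_
    rw [← ENNReal.ofReal_sub _ (hq.1 i)]
    exact ENNReal.ofReal_le_ofReal (le_abs_self _)
  have h : semidiscreteCost k τ (ENNReal.ofReal ∘ p) ≤ semidiscreteCost k τ (ENNReal.ofReal ∘ q) +
      B * ∑ i, (ENNReal.ofReal (p i) - ENNReal.ofReal (q i)) :=
    semidiscreteCost_le_add_mul_sum_tsub hk (measure_ne_top τ univ)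
    (by rw [measure_univ]; exact sum_ofReal_eq_one_of_mem_stdSimplex hp)
    (by rw [measure_univ]; exact sum_ofReal_eq_one_of_mem_stdSimplex hq)
  have hq' := semidiscreteCost_ofReal_ne_top (τ := τ) hB hk hq
  calc (semidiscreteCost k τ (ENNReal.ofReal ∘ p)).toReal
      ≤ (semidiscreteCost k τ (ENNReal.ofReal ∘ q) +
          B * ENNReal.ofReal (∑ i, |p i - q i|)).toReal :=
        ENNReal.toReal_mono (by finiteness) (h.trans (by gcongr))
    _ = _ := by
        rw [ENNReal.toReal_add hq' (by finiteness), ENNReal.toReal_mul,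
          ENNReal.toReal_ofReal (Finset.sum_nonneg fun i _ => abs_nonneg _)]

lemma continuousOn_semidiscreteCost (hB : B ≠ ⊤) (hk : ∀ i y, k i y ≤ B) :
    ContinuousOn (fun p => (semidiscreteCost k τ (ENNReal.ofReal ∘ p)).toReal)
      (stdSimplex ℝ ι) := by
  refine (LipschitzOnWith.of_dist_le_mul (K := B.toNNReal * Fintype.card ι)
    fun p hp q hq => ?_).continuousOn
  have hsum : ∑ i, |p i - q i| ≤ Fintype.card ι * dist p q := by
    simpa [Real.dist_eq] using
      Finset.sum_le_sum fun i (_ : i ∈ Finset.univ) => dist_le_pi_dist p q i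
  rw [Real.dist_eq, abs_le]
  push_cast
  rw [mul_assoc]
  have hB0 : 0 ≤ B.toReal := ENNReal.toReal_nonneg
  constructor
  · linarith [semidiscreteCost_toReal_le_add (τ := τ) hB hk hq hp, mul_le_mul_of_nonneg_left
      (hsum.trans_eq' (Finset.sum_congr rfl fun i _ => abs_sub_comm _ _)) hB0]
  · linarith [semidiscreteCost_toReal_le_add (τ := τ) hB hk hp hq,
      mul_le_mul_of_nonneg_left hsum hB0]

lemma toReal_mem_stdSimplex {w : ι → ℝ≥0∞} (hw : ∑ i, w i = 1) :
    (fun i => (w i).toReal) ∈ stdSimplex ℝ ι :=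
  ⟨fun i => ENNReal.toReal_nonneg, by
    rw [← ENNReal.toReal_sum fun i _ => ENNReal.sum_ne_top.1 (hw ▸ ENNReal.one_ne_top) i
      (Finset.mem_univ i), hw, ENNReal.toReal_one]⟩

lemma integrable_semidiscreteCost_comp (hB : B ≠ ⊤) (hk : ∀ i y, k i y ≤ B) {κ : Measure Ω}
    [IsFiniteMeasure κ] {v : Ω → ι → ℝ} (hv : Measurable v)
    (hv_mem : ∀ᵐ α ∂κ, v α ∈ stdSimplex ℝ ι) :
    Integrable (fun α => (semidiscreteCost k τ (ENNReal.ofReal ∘ v α)).toReal) κ := by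
  classical
  have hmeas := ((continuousOn_semidiscreteCost (τ := τ) hB hk).measurable_piecewise
    (continuousOn_const (c := (0 : ℝ))) (isClosed_stdSimplex ℝ ι).measurableSet).comp hv
  refine Integrable.of_bound (hmeas.aestronglyMeasurable.congr ?_) B.toReal ?_
  · filter_upwards [hv_mem] with α h using Set.piecewise_eq_of_mem _ _ _ h
  · filter_upwards [hv_mem] with α h
    rw [Real.norm_of_nonneg ENNReal.toReal_nonneg]
    exact ENNReal.toReal_mono hB
      (semidiscreteCost_le_of_forall_le hk (sum_ofReal_eq_one_of_mem_stdSimplex h))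

theorem semidiscreteCost_lintegral_le (hB : B ≠ ⊤) (hk : ∀ i y, k i y ≤ B) {κ : Measure Ω}
    [IsProbabilityMeasure κ] {w : Ω → ι → ℝ≥0∞} (hw : ∀ i, Measurable fun α => w α i)
    (hw₁ : ∀ᵐ α ∂κ, ∑ i, w α i = 1) :
    semidiscreteCost k τ (fun i => ∫⁻ α, w α i ∂κ) ≤ ∫⁻ α, semidiscreteCost k τ (w α) ∂κ := by
  set v : Ω → ι → ℝ := fun α i => (w α i).toReal
  have hw_le : ∀ᵐ α ∂κ, ∀ i, w α i ≤ 1 := hw₁.mono fun α h i =>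
    h ▸ Finset.single_le_sum (fun _ _ => bot_le) (Finset.mem_univ i)
  have hv_mem : ∀ᵐ α ∂κ, v α ∈ stdSimplex ℝ ι := hw₁.mono fun α h => toReal_mem_stdSimplex h
  have hv_w : ∀ᵐ α ∂κ, ENNReal.ofReal ∘ v α = w α := hw_le.mono fun α h => funext fun i =>
    ENNReal.ofReal_toReal (ne_top_of_le_ne_top ENNReal.one_ne_top (h i))
  have hv_meas : Measurable v := measurable_pi_lambda _ fun i => (hw i).ennreal_toReal
  have hv_int : Integrable v κ := Integrable.of_bound hv_meas.aestronglyMeasurable 1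
    (hv_mem.mono fun α h => mem_closedBall_zero_iff.1 (stdSimplex_subset_closedBall h))
  have hgv_int := integrable_semidiscreteCost_comp (τ := τ) hB hk hv_meas hv_mem
  have hv_avg : ENNReal.ofReal ∘ (∫ α, v α ∂κ) = fun i => ∫⁻ α, w α i ∂κ := funext fun i => by
    rw [Function.comp_apply, eval_integral (Integrable.eval hv_int),
      integral_toReal (hw i).aemeasurable (hw_le.mono fun α h => (h i).trans_lt ENNReal.one_lt_top),
      ENNReal.ofReal_toReal (ne_top_of_le_ne_top ENNReal.one_ne_top
        ((lintegral_mono_ae (hw_le.mono fun α h => h i)).trans_eq (by simp)))]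
  have hjensen := (convexOn_semidiscreteCost hB hk).map_integral_le
    (continuousOn_semidiscreteCost hB hk) (isClosed_stdSimplex ℝ ι) hv_mem hv_int hgv_int
  calc semidiscreteCost k τ (fun i => ∫⁻ α, w α i ∂κ)
      = ENNReal.ofReal (semidiscreteCost k τ (ENNReal.ofReal ∘ ∫ α, v α ∂κ)).toReal := by
        rw [ENNReal.ofReal_toReal (semidiscreteCost_ofReal_ne_top hB hk
          ((convex_stdSimplex ℝ ι).integral_mem (isClosed_stdSimplex ℝ ι) hv_mem hv_int)), hv_avg]
    _ ≤ ENNReal.ofReal (∫ α, (semidiscreteCost k τ (ENNReal.ofReal ∘ v α)).toReal ∂κ) :=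
        ENNReal.ofReal_le_ofReal hjensen
    _ = ∫⁻ α, semidiscreteCost k τ (w α) ∂κ := by
        rw [ofReal_integral_eq_lintegral_ofReal hgv_int
          (ae_of_all _ fun α => ENNReal.toReal_nonneg)]
        refine lintegral_congr_ae ((hv_mem.and hv_w).mono fun α ⟨hmem, hvw⟩ => ?_)
        dsimp only
        rw [ENNReal.ofReal_toReal (semidiscreteCost_ofReal_ne_top hB hk hmem), hvw]

end SemidiscreteCost

structure SpherePartition (d : ℕ) (δ : ℝ≥0∞) where
  N : ℕ
  center : Fin N → EuclideanSpace ℝ (Fin d)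
  piece : Fin N → Set (EuclideanSpace ℝ (Fin d))
  norm_center : ∀ i, ‖center i‖ = 1
  measurableSet_piece : ∀ i, MeasurableSet (piece i)
  pairwise_disjoint : Pairwise (Disjoint on piece)
  iUnion_piece : ⋃ i, piece i = Metric.sphere 0 1
  geoCost_le : ∀ i, ∀ x ∈ piece i, geoCost (center i) x ≤ δ

namespace SpherePartition

variable {d : ℕ} {δ : ℝ≥0∞}

local notation "𝕊" => Metric.sphere (0 : EuclideanSpace ℝ (Fin d)) 1

lemma nonempty (hδ : δ ≠ 0) : Nonempty (SpherePartition d δ) := by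
  obtain ⟨N, c, P, hc, hP, hdisj, hcover, hsub⟩ :=
    (isCompact_sphere (0 : EuclideanSpace ℝ (Fin d)) 1).exists_measurable_partition_subordinate
      Metric.isClosed_sphere.measurableSet (fun c => {y | geoCost c y < δ})
      (fun c _ => isOpen_lt (continuous_geoCost c) continuous_const)
      (fun c hc => show geoCost c c < δ by
        rw [geoCost_self (mem_sphere_zero_iff_norm.1 hc)]; exact pos_iff_ne_zero.2 hδ)
  exact ⟨⟨N, c, P, fun i => mem_sphere_zero_iff_norm.1 (hc i), hP, hdisj, hcover,
    fun i x hx => (hsub i hx).le⟩⟩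

variable (P : SpherePartition d δ)

lemma norm_eq_one {i : Fin P.N} {x : EuclideanSpace ℝ (Fin d)} (hx : x ∈ P.piece i) : ‖x‖ = 1 :=
  mem_sphere_zero_iff_norm.1 (P.iUnion_piece ▸ mem_iUnion_of_mem i hx)

lemma geoCost_center_le {i : Fin P.N} {x y : EuclideanSpace ℝ (Fin d)} (hx : x ∈ P.piece i)
    (hy : ‖y‖ = 1) : geoCost (P.center i) y ≤ δ + geoCost x y :=
  (geoCost_triangle (P.norm_center i) (P.norm_eq_one hx) hy).trans
    (by gcongr; exact P.geoCost_le i x hx)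

lemma geoCost_le_center {i : Fin P.N} {x y : EuclideanSpace ℝ (Fin d)} (hx : x ∈ P.piece i)
    (hy : ‖y‖ = 1) : geoCost x y ≤ δ + geoCost (P.center i) y := by
  refine (geoCost_triangle (P.norm_eq_one hx) (P.norm_center i) hy).trans ?_
  gcongr
  rw [geoCost, real_inner_comm]
  exact P.geoCost_le i x hx

lemma sum_restrict_preimage_piece {Y : Type*} [MeasurableSpace Y] (ν : Measure Y)
    {f : Y → EuclideanSpace ℝ (Fin d)} (hf : Measurable f) (hν : ν (f ⁻¹' 𝕊ᶜ) = 0) :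
    ∑ i, ν.restrict (f ⁻¹' P.piece i) = ν := by
  rw [← Measure.sum_fintype, ← Measure.restrict_iUnion
    (fun i j hij => (P.pairwise_disjoint hij).preimage f)
    (fun i => hf (P.measurableSet_piece i)), ← preimage_iUnion, P.iUnion_piece]
  exact Measure.restrict_eq_self_of_ae_mem (measure_mono_null (fun y hy => hy) hν)

lemma sum_measure_piece {ν : Measure (EuclideanSpace ℝ (Fin d))} (hν : ν 𝕊ᶜ = 0) :
    ∑ i, ν (P.piece i) = ν univ := by
  conv_rhs => rw [← P.sum_restrict_preimage_piece ν measurable_id hν]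
  simp

theorem semidiscreteCost_le_W1geo_add {ν τ : Measure (EuclideanSpace ℝ (Fin d))}
    (hν : ν 𝕊ᶜ = 0) (hτ : τ 𝕊ᶜ = 0) :
    semidiscreteCost (fun i => geoCost (P.center i)) τ (fun i => ν (P.piece i)) ≤
      W1geo ν τ + δ * ν univ := by
  rw [← tsub_le_iff_right]
  refine le_iInf₂ fun γ ⟨h₁, h₂⟩ => tsub_le_iff_right.2 ?_
  have hfst : ∀ s, MeasurableSet s → γ (Prod.fst ⁻¹' s) = ν s := fun s hs => by
    rw [← Measure.map_apply measurable_fst hs, h₁]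
  have hsnd : ∀ᵐ z ∂γ, ‖z.2‖ = 1 :=
    ae_of_ae_map measurable_snd.aemeasurable (h₂ ▸ ae_norm_eq_one hτ)
  set γi : Fin P.N → Measure _ := fun i => γ.restrict (Prod.fst ⁻¹' P.piece i)
  have hγ : ∑ i, γi i = γ :=
    P.sum_restrict_preimage_piece γ measurable_fst
      (hfst _ Metric.isClosed_sphere.measurableSet.compl ▸ hν)
  calc semidiscreteCost (fun i => geoCost (P.center i)) τ (fun i => ν (P.piece i))
      ≤ ∑ i, ∫⁻ y, geoCost (P.center i) y ∂(γi i).map Prod.snd := by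
        refine semidiscreteCost_le (fun i => ?_) ?_
        · rw [Measure.map_apply measurable_snd MeasurableSet.univ, preimage_univ,
            Measure.restrict_apply_univ, hfst _ (P.measurableSet_piece i)]
        · rw [← Measure.map_finset_sum' measurable_snd.aemeasurable, hγ, h₂]
    _ = ∑ i, ∫⁻ z, geoCost (P.center i) z.2 ∂γi i := by
        simp only [lintegral_map (continuous_geoCost _).measurable measurable_snd]
    _ ≤ ∑ i, ∫⁻ z, (δ + geoCost z.1 z.2) ∂γi i := by
        refine Finset.sum_le_sum fun i _ => lintegral_mono_ae ?_
        filter_upwards [ae_restrict_mem (measurable_fst (P.measurableSet_piece i)),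
          ae_restrict_of_ae hsnd] with z hz₁ hz₂ using P.geoCost_center_le hz₁ hz₂
    _ = ∫⁻ p, geoCost p.1 p.2 ∂γ + δ * ν univ := by
        rw [← lintegral_finsetSum_measure, hγ, lintegral_add_left measurable_const,
          lintegral_const, add_comm, ← hfst _ MeasurableSet.univ, preimage_univ]

lemma lintegral_geoCost_restrict_prod_le (i : Fin P.N) (ν : Measure (EuclideanSpace ℝ (Fin d)))
    (η : Measure (EuclideanSpace ℝ (Fin d))) [SFinite η] (hη : ∀ᵐ y ∂η, ‖y‖ = 1) :
    ∫⁻ z, geoCost z.1 z.2 ∂(ν.restrict (P.piece i)).prod η ≤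
      ν (P.piece i) * (δ * η univ + ∫⁻ y, geoCost (P.center i) y ∂η) :=
  calc ∫⁻ z, geoCost z.1 z.2 ∂(ν.restrict (P.piece i)).prod η
      ≤ ∫⁻ z, (δ + geoCost (P.center i) z.2) ∂(ν.restrict (P.piece i)).prod η := by
        refine lintegral_mono_ae ?_
        filter_upwards [Measure.quasiMeasurePreserving_fst.ae
            (ae_restrict_mem (P.measurableSet_piece i)),
          Measure.quasiMeasurePreserving_snd.ae hη] with z hz₁ hz₂
        exact P.geoCost_le_center hz₁ hz₂
    _ = ν (P.piece i) * (δ * η univ + ∫⁻ y, geoCost (P.center i) y ∂η) := by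
        rw [(lintegral_map (f := fun y => δ + geoCost (P.center i) y)
          (measurable_const.add (continuous_geoCost _).measurable) measurable_snd).symm,
          Measure.map_snd_prod, lintegral_smul_measure, Measure.restrict_apply_univ,
          lintegral_add_left measurable_const, lintegral_const, smul_eq_mul]

theorem W1geo_le_semidiscreteCost_add {ν τ : Measure (EuclideanSpace ℝ (Fin d))}
    [IsFiniteMeasure ν] (hν : ν 𝕊ᶜ = 0) (hτ : τ 𝕊ᶜ = 0) :
    W1geo ν τ ≤
      semidiscreteCost (fun i => geoCost (P.center i)) τ (fun i => ν (P.piece i)) + δ * τ univ := by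
  rw [← tsub_le_iff_right]
  refine le_iInf₂ fun η ⟨hη, hητ⟩ => tsub_le_iff_right.2 ?_
  have : ∀ i, IsFiniteMeasure (η i) := fun i => ⟨by rw [hη]; exact measure_lt_top _ _⟩
  have hη𝕊 : ∀ i, ∀ᵐ y ∂η i, ‖y‖ = 1 := fun i => ae_mono
    (hητ ▸ Finset.single_le_sum (f := η) (fun _ _ => bot_le) (Finset.mem_univ i))
    (ae_norm_eq_one hτ)
  set γ := ∑ i, (ν (P.piece i))⁻¹ • (ν.restrict (P.piece i)).prod (η i)
  have h₁ : γ.map Prod.fst = ν := by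
    rw [Measure.map_finset_sum' measurable_fst.aemeasurable]
    conv_rhs => rw [← P.sum_restrict_preimage_piece ν measurable_id hν]
    refine Finset.sum_congr rfl fun i _ => ?_
    rw [Measure.map_smul, Measure.map_fst_prod, hη]
    exact Measure.inv_smul_smul_of_ne_top (measure_ne_top _ _) Measure.restrict_eq_zero.2
  have h₂ : γ.map Prod.snd = τ := by
    rw [Measure.map_finset_sum' measurable_snd.aemeasurable, ← hητ]
    refine Finset.sum_congr rfl fun i _ => ?_
    rw [Measure.map_smul, Measure.map_snd_prod, Measure.restrict_apply_univ]
    exact Measure.inv_smul_smul_of_ne_top (measure_ne_top _ _)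
      fun h => Measure.measure_univ_eq_zero.1 ((hη i).trans h)
  calc W1geo ν τ ≤ ∫⁻ z, geoCost z.1 z.2 ∂γ := W1geo_le_lintegral h₁ h₂
    _ ≤ ∑ i, (δ * η i univ + ∫⁻ y, geoCost (P.center i) y ∂η i) := by
        rw [lintegral_finsetSum_measure]
        refine Finset.sum_le_sum fun i _ => ?_
        rw [lintegral_smul_measure, smul_eq_mul]
        refine (mul_le_mul_right
          (P.lintegral_geoCost_restrict_prod_le i ν (η i) (hη𝕊 i)) _).trans ?_
        rw [← mul_assoc]
        exact mul_le_of_le_one_left bot_le (ENNReal.inv_mul_le_one _)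
    _ = ∑ i, ∫⁻ y, geoCost (P.center i) y ∂η i + δ * τ univ := by
        rw [Finset.sum_add_distrib, add_comm, ← Finset.mul_sum, ← hητ]
        simp

end SpherePartition

section Conditioning

variable {Ω X : Type*} [MeasurableSpace Ω] [MeasurableSpace X]

lemma isProbabilityMeasure_condOn {μ : Measure X} {A : Set X} (h₀ : μ A ≠ 0) (h : μ A ≠ ⊤) :
    IsProbabilityMeasure (condOn μ A) :=
  ProbabilityTheory.cond_isProbabilityMeasure_of_finite h₀ h

lemma measurable_condOn {m : Ω → Measure X} (hm : Measurable m) {S : Set X}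
    (hS : MeasurableSet S) : Measurable fun α => condOn (m α) S :=
  Measure.measurable_of_measurable_coe _ fun s hs => by
    simp only [condOn, Measure.smul_apply, Measure.restrict_apply hs, smul_eq_mul]
    exact ((Measure.measurable_coe hS).comp hm).inv.mul
      ((Measure.measurable_coe (hs.inter hS)).comp hm)

lemma condOn_bind (lam : Measure Ω) {m : Ω → Measure X} (hm : Measurable m)
    [∀ α, IsFiniteMeasure (m α)] {S : Set X} (hS : MeasurableSet S) :
    condOn (lam.bind m) S =
      (condOn (lam.withDensity fun α => m α S) univ).bind fun α => condOn (m α) S := by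
  have hw : Measurable fun α => m α S := (Measure.measurable_coe hS).comp hm
  ext s hs
  rw [Measure.bind_apply hs (measurable_condOn hm hS).aemeasurable, condOn, condOn,
    withDensity_apply _ MeasurableSet.univ, Measure.restrict_univ, Measure.restrict_univ,
    lintegral_smul_measure, lintegral_withDensity_eq_lintegral_mul _ hw
      (g := fun α => condOn (m α) S s) ((Measure.measurable_coe hs).comp (measurable_condOn hm hS)),
    ← Measure.bind_apply hS hm.aemeasurable]
  simp only [condOn, Measure.smul_apply, Measure.restrict_apply hs, smul_eq_mul, Pi.mul_apply]
  rw [Measure.bind_apply (hs.inter hS) hm.aemeasurable]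
  congr 1
  refine lintegral_congr fun α => ?_
  rcases eq_or_ne (m α S) 0 with h | h
  · simp [h, measure_mono_null inter_subset_right h]
  · rw [← mul_assoc, ENNReal.mul_inv_cancel h (measure_ne_top _ _), one_mul]

lemma condOn_withDensity_univ_setOf_lt_le (lam : Measure Ω) [IsProbabilityMeasure lam]
    {w : Ω → ℝ≥0∞} (hw : Measurable w) (t : ℝ≥0∞) :
    condOn (lam.withDensity w) univ {α | w α < t} ≤ (lam.withDensity w univ)⁻¹ * t := by
  have hG : MeasurableSet {α | w α < t} := measurableSet_lt hw measurable_const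
  rw [condOn, Measure.restrict_univ, Measure.smul_apply, smul_eq_mul, withDensity_apply _ hG]
  gcongr
  calc ∫⁻ α in {α | w α < t}, w α ∂lam ≤ ∫⁻ _ in {α | w α < t}, t ∂lam :=
        setLIntegral_mono measurable_const fun α hα => hα.le
    _ ≤ t := by rw [setLIntegral_const]; exact mul_le_of_le_one_right bot_le prob_le_one

end Conditioning

section RadialProjection

variable {d : ℕ}

local notation "𝕊" => Metric.sphere (0 : EuclideanSpace ℝ (Fin d)) 1

lemma measurable_rproj : Measurable (rproj (d := d)) :=
  measurable_norm.inv.smul measurable_id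

lemma map_rproj_condOn_compl_sphere (μ : Measure (EuclideanSpace ℝ (Fin d)))
    {S : Set (EuclideanSpace ℝ (Fin d))} (hS : ∀ x ∈ S, x ≠ 0) :
    (condOn μ S).map rproj 𝕊ᶜ = 0 := by
  have hS𝕊 : rproj ⁻¹' 𝕊ᶜ ∩ S = ∅ := eq_empty_of_forall_notMem fun x ⟨hx, hxS⟩ =>
    hx (mem_sphere_zero_iff_norm.2 (norm_smul_inv_norm (hS x hxS)))
  rw [Measure.map_apply measurable_rproj Metric.isClosed_sphere.measurableSet.compl, condOn,
    Measure.smul_apply, Measure.restrict_apply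
      (measurable_rproj Metric.isClosed_sphere.measurableSet.compl), hS𝕊, measure_empty,
    smul_zero]

end RadialProjection

section Mixture

variable {d : ℕ} {Ω : Type*} [MeasurableSpace Ω]

local notation "𝕊" => Metric.sphere (0 : EuclideanSpace ℝ (Fin d)) 1

theorem W1geo_bind_le {κ : Measure Ω} [IsProbabilityMeasure κ]
    {σ : Measure (EuclideanSpace ℝ (Fin d))} [IsProbabilityMeasure σ] (hσ : σ 𝕊ᶜ = 0)
    {ν : Ω → Measure (EuclideanSpace ℝ (Fin d))} (hν : Measurable ν)
    (hν₁ : ∀ᵐ α ∂κ, IsProbabilityMeasure (ν α)) (hν𝕊 : ∀ α, ν α 𝕊ᶜ = 0) :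
    W1geo (κ.bind ν) σ ≤ ∫⁻ α, W1geo (ν α) σ ∂κ := by
  refine ENNReal.le_of_forall_pos_le_add fun δ hδ _ => ?_
  obtain ⟨P⟩ := SpherePartition.nonempty (d := d) (δ := δ / 2) (by simpa using hδ.ne')
  have hbind : ∀ s, MeasurableSet s → κ.bind ν s = ∫⁻ α, ν α s ∂κ := fun s hs =>
    Measure.bind_apply hs hν.aemeasurable
  have : IsProbabilityMeasure (κ.bind ν) := isProbabilityMeasure_bind hν.aemeasurable hν₁
  have hbind𝕊 : κ.bind ν 𝕊ᶜ = 0 := by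
    simp [hbind _ Metric.isClosed_sphere.measurableSet.compl, hν𝕊]
  calc W1geo (κ.bind ν) σ
      ≤ semidiscreteCost (fun i => geoCost (P.center i)) σ (fun i => κ.bind ν (P.piece i)) +
          δ / 2 := by
        simpa using P.W1geo_le_semidiscreteCost_add hbind𝕊 hσ
    _ ≤ ∫⁻ α, semidiscreteCost (fun i => geoCost (P.center i)) σ (fun i => ν α (P.piece i)) ∂κ +
          δ / 2 := by
        simp only [hbind _ (P.measurableSet_piece _)]
        gcongr
        exact semidiscreteCost_lintegral_le ENNReal.ofReal_ne_top (fun _ _ => geoCost_le_pi _ _)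
          (fun i => (Measure.measurable_coe (P.measurableSet_piece i)).comp hν)
          (hν₁.mono fun α h => by rw [P.sum_measure_piece (hν𝕊 α), measure_univ])
    _ ≤ ∫⁻ α, (W1geo (ν α) σ + δ / 2) ∂κ + δ / 2 := by
        gcongr ?_ + _
        refine lintegral_mono_ae (hν₁.mono fun α h => ?_)
        simpa using P.semidiscreteCost_le_W1geo_add (hν𝕊 α) hσ
    _ = ∫⁻ α, W1geo (ν α) σ ∂κ + δ := by
        rw [lintegral_add_right _ measurable_const, lintegral_const, measure_univ, mul_one,
          add_assoc, ENNReal.add_halves]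

theorem W1geo_bind_le_add_pi_mul {κ : Measure Ω} [IsProbabilityMeasure κ]
    {σ : Measure (EuclideanSpace ℝ (Fin d))} [IsProbabilityMeasure σ] (hσ : σ 𝕊ᶜ = 0)
    {ν : Ω → Measure (EuclideanSpace ℝ (Fin d))} (hν : Measurable ν)
    (hν₁ : ∀ᵐ α ∂κ, IsProbabilityMeasure (ν α)) (hν𝕊 : ∀ α, ν α 𝕊ᶜ = 0) {G : Set Ω}
    (hG : MeasurableSet G) {ε : ℝ≥0∞} (hε : ∀ α ∉ G, W1geo (ν α) σ ≤ ε) :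
    W1geo (κ.bind ν) σ ≤ ε + ENNReal.ofReal π * κ G :=
  calc W1geo (κ.bind ν) σ ≤ ∫⁻ α, W1geo (ν α) σ ∂κ := W1geo_bind_le hσ hν hν₁ hν𝕊
    _ ≤ ∫⁻ α, (ε + G.indicator (fun _ => ENNReal.ofReal π) α) ∂κ := by
        refine lintegral_mono_ae (hν₁.mono fun α h => ?_)
        by_cases hα : α ∈ G
        · simpa [hα] using le_add_left (W1geo_le_pi (ν α) σ)
        · simpa [hα] using hε α hα
    _ = ε + ENNReal.ofReal π * κ G := by
        rw [lintegral_add_left measurable_const, lintegral_indicator_const hG, lintegral_const,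
          measure_univ, mul_one]

theorem W1geo_map_rproj_condOn_bind_le (lam : Measure Ω) [IsProbabilityMeasure lam]
    {m : Ω → Measure (EuclideanSpace ℝ (Fin d))} (hm : Measurable m)
    [∀ α, IsProbabilityMeasure (m α)] {S : Set (EuclideanSpace ℝ (Fin d))} (hS : MeasurableSet S)
    (hS₀ : ∀ x ∈ S, x ≠ 0) (hS_pos : lam.bind m S ≠ 0) {σ : Measure (EuclideanSpace ℝ (Fin d))}
    [IsProbabilityMeasure σ] (hσ : σ 𝕊ᶜ = 0) {ε : ℝ≥0∞}
    (hm_rad : ∀ α, ε ≤ m α S → W1geo ((condOn (m α) S).map rproj) σ ≤ ε) :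
    W1geo ((condOn (lam.bind m) S).map rproj) σ ≤
      ε + ENNReal.ofReal π * ((lam.bind m S)⁻¹ * ε) := by
  set w := fun α => m α S
  have hw : Measurable w := (Measure.measurable_coe hS).comp hm
  have hmass : lam.withDensity w univ = lam.bind m S := by
    rw [withDensity_apply _ MeasurableSet.univ, Measure.restrict_univ,
      Measure.bind_apply hS hm.aemeasurable]
  have : IsProbabilityMeasure (lam.bind m) :=
    isProbabilityMeasure_bind hm.aemeasurable (ae_of_all _ inferInstance)
  have : IsProbabilityMeasure (condOn (lam.withDensity w) univ) :=
    isProbabilityMeasure_condOn (hmass ▸ hS_pos) (hmass ▸ measure_ne_top _ _)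
  have hw₀ : ∀ᵐ α ∂condOn (lam.withDensity w) univ, w α ≠ 0 := by
    refine Measure.ae_smul_measure ?_ _
    rw [Measure.restrict_univ]
    exact (ae_withDensity_iff hw).2 (ae_of_all _ fun α h => h)
  rw [condOn_bind lam hm hS, Measure.map_bind _ (measurable_condOn hm hS) measurable_rproj,
    ← hmass]
  refine (W1geo_bind_le_add_pi_mul hσ ((Measure.measurable_map _ measurable_rproj).comp
    (measurable_condOn hm hS)) (hw₀.mono fun α h => ?_)
    (fun α => map_rproj_condOn_compl_sphere _ hS₀) (measurableSet_lt hw measurable_const)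
    (fun α hα => hm_rad α (not_lt.1 hα))).trans ?_
  · have := isProbabilityMeasure_condOn h (measure_ne_top (m α) S)
    exact Measure.isProbabilityMeasure_map measurable_rproj.aemeasurable
  · gcongr
    exact condOn_withDensity_univ_setOf_lt_le lam hw _

end Mixture

lemma ofReal_add_pi_mul_le_four_mul_sqrt {ε : ℝ} (hε₀ : 0 < ε) (hε : ε < 1 / 2) {c : ℝ≥0∞}
    (hc : ENNReal.ofReal (4 * √ε) ≤ c) :
    ENNReal.ofReal ε + ENNReal.ofReal π * (c⁻¹ * ENNReal.ofReal ε) ≤ ENNReal.ofReal (4 * √ε) := by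
  have hs₀ : 0 < √ε := Real.sqrt_pos.2 hε₀
  have hs₁ : √ε ≤ 1 := Real.sqrt_le_one.2 (by linarith)
  have hsq : √ε * √ε = ε := Real.mul_self_sqrt hε₀.le
  have hc' : c⁻¹ ≤ ENNReal.ofReal (4 * √ε)⁻¹ := by
    rw [ENNReal.ofReal_inv_of_pos (by positivity)]
    exact ENNReal.inv_le_inv.2 hc
  calc ENNReal.ofReal ε + ENNReal.ofReal π * (c⁻¹ * ENNReal.ofReal ε)
      ≤ ENNReal.ofReal ε + ENNReal.ofReal π * (ENNReal.ofReal (4 * √ε)⁻¹ * ENNReal.ofReal ε) := by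
        gcongr
    _ = ENNReal.ofReal (ε + π * ((4 * √ε)⁻¹ * ε)) := by
        rw [ENNReal.ofReal_add hε₀.le (by positivity), ENNReal.ofReal_mul Real.pi_pos.le,
          ENNReal.ofReal_mul (by positivity)]
    _ ≤ ENNReal.ofReal (4 * √ε) := by
        refine ENNReal.ofReal_le_ofReal ?_
        have : π * ((4 * √ε)⁻¹ * ε) = π / 4 * √ε :=
          calc π * ((4 * √ε)⁻¹ * ε) = π * ((4 * √ε)⁻¹ * (√ε * √ε)) := by rw [hsq]
            _ = π / 4 * √ε := by field_simp
        rw [this]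
        nlinarith [Real.pi_lt_four]

theorem stmt6_general {d : ℕ} (ε : ℝ) (hε0 : 0 < ε) (hε : ε < 1/2)
    (σ : Measure (EuclideanSpace ℝ (Fin d))) (hσ : IsUniformSphere σ)
    {Ω : Type*} [MeasurableSpace Ω] (lam : Measure Ω) [IsProbabilityMeasure lam]
    (m : Ω → Measure (EuclideanSpace ℝ (Fin d)))
    (hmprob : ∀ α, IsProbabilityMeasure (m α))
    (hmeas : ∀ s : Set (EuclideanSpace ℝ (Fin d)), MeasurableSet s →
      Measurable fun α => m α s)
    (hrad : ∀ α, IsRadial σ ε (m α)) :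
    IsRadial σ (4 * Real.sqrt ε) (lam.bind m) := by
  obtain ⟨hσ₁, hσ𝕊, -⟩ := hσ
  intro J hJ hJ₀ hmass
  have hS₀ : ∀ x ∈ shell d J, x ≠ 0 := fun x hx h => by simpa [shell, h] using hJ₀ hx
  calc W1geo ((condOn (lam.bind m) (shell d J)).map rproj) σ
      ≤ ENNReal.ofReal ε +
          ENNReal.ofReal π * ((lam.bind m (shell d J))⁻¹ * ENNReal.ofReal ε) :=
        W1geo_map_rproj_condOn_bind_le lam (Measure.measurable_of_measurable_coe m hmeas)
          (measurable_norm hJ.measurableSet) hS₀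
          (lt_of_lt_of_le (by positivity) hmass).ne'
          ((prob_compl_eq_zero_iff Metric.isClosed_sphere.measurableSet).2 hσ𝕊)
          fun α hα => hrad α J hJ hJ₀ hα
    _ ≤ ENNReal.ofReal (4 * √ε) := ofReal_add_pi_mul_le_four_mul_sqrt hε0 hε hmass

/-- A mixture of ε-radial probability measures is 4√ε-radial. -/
theorem stmt6 {d : ℕ} (hd : 1 ≤ d) (ε : ℝ) (hε0 : 0 < ε) (hε : ε < 1/2)
    (σ : Measure (EuclideanSpace ℝ (Fin d))) (hσ : IsUniformSphere σ)
    {Ω : Type*} [MeasurableSpace Ω] (lam : Measure Ω) [IsProbabilityMeasure lam]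
    (m : Ω → Measure (EuclideanSpace ℝ (Fin d)))
    (hmprob : ∀ α, IsProbabilityMeasure (m α))
    (hmeas : ∀ s : Set (EuclideanSpace ℝ (Fin d)), MeasurableSet s →
      Measurable fun α => m α s)
    (hrad : ∀ α, IsRadial σ ε (m α)) :
    IsRadial σ (4 * Real.sqrt ε) (lam.bind m) :=
  stmt6_general ε hε0 hε σ hσ lam m hmprob hmeas hrad
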